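/- Let f : [a,b] → ℝ with f^{(n−1)} absolutely continuous. Then for every x ∈ [a,b], ∫_a^b f(t) dt = Σ_{k=0}^{n−1} (1/(k+1)!)[(x−a)^{k+1} f^{(k)}(a) + (−1)^k (b−x)^{k+1} f^{(k)}(b)] + (1/n!)∫_a^b (x−t)^n f^{(n)}(t) dt. -/

import Mathlib

open MeasureTheory Set

private lemma step_ibp (a b x : ℝ) (hab : a ≤ b) (k : ℕ) (g g' : ℝ → ℝ)
    (hg : ∀ t ∈ Icc a b, HasDerivAt g (g' t) t)
    (hint : IntervalIntegrable g' volume a b) :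
    ∫ t in a..b, (x - t) ^ k * g t =
      ((x - a) ^ (k + 1) * g a - (x - b) ^ (k + 1) * g b) / (k + 1)
        + (1 / (k + 1 : ℝ)) * ∫ t in a..b, (x - t) ^ (k + 1) * g' t := by
  have huIcc : Set.uIcc a b = Icc a b := uIcc_of_le hab
  have hcg : ContinuousOn g (Icc a b) := fun t ht => (hg t ht).continuousAt.continuousWithinAt
  have hk1 : ((k : ℝ) + 1) ≠ 0 := by positivity
  have hder : ∀ t ∈ Set.uIcc a b,
      HasDerivAt (fun t => -((x - t) ^ (k + 1)) / (k + 1) * g t)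
        ((x - t) ^ k * g t - (x - t) ^ (k + 1) / (k + 1) * g' t) t := by
    intro t ht
    rw [huIcc] at ht
    have h0 : HasDerivAt (fun t : ℝ => (x - t)) (-1) t := (hasDerivAt_id t).const_sub x
    have h1 : HasDerivAt (fun t : ℝ => -((x - t) ^ (k + 1)) / (k + 1)) ((x - t) ^ k) t := by
      have h2 : HasDerivAt (fun t : ℝ => -((x - t) ^ (k + 1)) / ((k : ℝ) + 1))
          (-(((k + 1 : ℕ) : ℝ) * (x - t) ^ (k + 1 - 1) * -1) / ((k : ℝ) + 1)) t :=
        (h0.pow (k + 1)).neg.div_const ((k : ℝ) + 1)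
      convert h2 using 1
      rw [Nat.add_sub_cancel]; push_cast
      field_simp
    have : HasDerivAt (fun t => -((x - t) ^ (k + 1)) / (k + 1) * g t)
        ((x - t) ^ k * g t + -((x - t) ^ (k + 1)) / (k + 1) * g' t) t := h1.mul (hg t ht)
    convert this using 1
    ring
  have hi1 : IntervalIntegrable (fun t => (x - t) ^ k * g t) volume a b := by
    apply ContinuousOn.intervalIntegrable
    rw [huIcc]
    exact (Continuous.continuousOn (by continuity)).mul hcg
  have hi2 : IntervalIntegrable (fun t => (x - t) ^ (k + 1) / (k + 1) * g' t) volume a b := by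
    apply hint.continuousOn_mul
    exact Continuous.continuousOn (by continuity)
  have key := intervalIntegral.integral_eq_sub_of_hasDerivAt hder (hi1.sub hi2)
  rw [intervalIntegral.integral_sub hi1 hi2] at key
  have hsplit : ∫ t in a..b, (x - t) ^ (k + 1) / (k + 1) * g' t
      = (1 / ((k : ℝ) + 1)) * ∫ t in a..b, (x - t) ^ (k + 1) * g' t := by
    rw [← intervalIntegral.integral_const_mul]
    apply intervalIntegral.integral_congr
    intro t _
    field_simp
  rw [hsplit] at key
  have : ∫ t in a..b, (x - t) ^ k * g t
      = (-((x - b) ^ (k + 1)) / (k + 1) * g b - -((x - a) ^ (k + 1)) / (k + 1) * g a)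
        + (1 / ((k : ℝ) + 1)) * ∫ t in a..b, (x - t) ^ (k + 1) * g' t := by
    linarith
  rw [this]
  field_simp
  ring

theorem endpoint_taylor_identity
    (a b : ℝ) (n : ℕ) (fd : ℕ → ℝ → ℝ) (hab : a < b) (hn : 1 ≤ n)
    (hderiv : ∀ k < n, ∀ x ∈ Icc a b, HasDerivAt (fd k) (fd (k + 1) x) x)
    (hint : IntervalIntegrable (fd n) volume a b) :
    ∀ x ∈ Icc a b,
      ∫ t in a..b, fd 0 t =
        (∑ k ∈ Finset.range n,
          (1 / (Nat.factorial (k + 1) : ℝ)) *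
            ((x - a) ^ (k + 1) * fd k a + (-1 : ℝ) ^ k * (b - x) ^ (k + 1) * fd k b)) +
        (1 / (Nat.factorial n : ℝ)) * ∫ t in a..b, (x - t) ^ n * fd n t := by
  intro x hx
  induction n, hn using Nat.le_induction with
  | base =>
    have hstep := step_ibp a b x hab.le 0 (fd 0) (fd 1)
      (fun t ht => hderiv 0 (by norm_num) t ht) hint
    simp only [pow_zero, one_mul, pow_one] at hstep ⊢
    rw [hstep]
    simp [Finset.sum_range_one, Nat.factorial]
    ring
  | succ n hn ih =>
    have hderiv' : ∀ k < n, ∀ x ∈ Icc a b, HasDerivAt (fd k) (fd (k + 1) x) x :=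
      fun k hk => hderiv k (Nat.lt_succ_of_lt hk)
    have hcont : ContinuousOn (fd n) (Icc a b) :=
      fun t ht => (hderiv n (Nat.lt_succ_self n) t ht).continuousAt.continuousWithinAt
    have hint' : IntervalIntegrable (fd n) volume a b := by
      apply ContinuousOn.intervalIntegrable
      rwa [uIcc_of_le hab.le]
    have hih := ih hderiv' hint'
    have hstep := step_ibp a b x hab.le n (fd n) (fd (n + 1))
      (fun t ht => hderiv n (Nat.lt_succ_self n) t ht) hint
    have hfac : (Nat.factorial (n + 1) : ℝ) = ((n : ℝ) + 1) * (Nat.factorial n : ℝ) := by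
      rw [Nat.factorial_succ]; push_cast; ring
    have hfne : (Nat.factorial n : ℝ) ≠ 0 := by positivity
    have hn1 : ((n : ℝ) + 1) ≠ 0 := by positivity
    have h2 : ((-1 : ℝ)) ^ n * (b - x) ^ n = (x - b) ^ n := by
      rw [show x - b = -(b - x) by ring, neg_pow (b - x) n]
    rw [hih, hstep, Finset.sum_range_succ, hfac]
    field_simp
    linear_combination ((x - b) * fd n b) * h2
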